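/- arXiv:2105.00513 — 2 statements merged into one kernel-verified Lean document; each statement's English description precedes it below -/
import Mathlib

section
/- Let q be a prime power such that 3 divides q−1 or 4 divides q−1, and set n = 3(q+1)+1. Then for every integer i with 1 ≤ i ≤ q there exists a Hermitian self-orthogonal linear code over F_{q^2} with parameters [n+i, 3+i, d] for some d ≥ n−2−i. -/
/-- The Hermitian inner product `⟨x,y⟩ₕ = ∑ i, x i * (y i)^q` on `Fin n → F`. -/
def hermInner (q : ℕ) {F : Type} [Field F] {n : ℕ} (x y : Fin n → F) : F :=
  ∑ i, x i * y i ^ q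

/-- The Hermitian dual of a set `C` of codewords:
`C^{⊥ₕ} = {y | ∀ x ∈ C, ⟨x,y⟩ₕ = 0}`. -/
def hermDual (q : ℕ) {F : Type} [Field F] {n : ℕ} (C : Set (Fin n → F)) :
    Set (Fin n → F) :=
  {y | ∀ x ∈ C, hermInner q x y = 0}

/-- A linear code `C` is Hermitian self-orthogonal if `C ⊆ C^{⊥ₕ}`. -/
def IsHermSelfOrth (q : ℕ) {F : Type} [Field F] {n : ℕ}
    (C : Submodule F (Fin n → F)) : Prop :=
  (C : Set (Fin n → F)) ⊆ hermDual q (C : Set (Fin n → F))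

/-- The dimension of the Hermitian hull `Hull_h(C) = C ∩ C^{⊥ₕ}` of a linear code `C`
(the hull is a linear subspace, so taking the span does not change it). -/
noncomputable def hermHullDim (q : ℕ) {F : Type} [Field F] {n : ℕ}
    (C : Submodule F (Fin n → F)) : ℕ :=
  Module.finrank F
    (Submodule.span F ((C : Set (Fin n → F)) ∩ hermDual q (C : Set (Fin n → F))))

/-- `d` is the minimum Hamming distance of the set `S` of codewords, i.e. the least
Hamming weight of a nonzero element of `S`. -/
def HasMinDist {F : Type} [Field F] [DecidableEq F] {n : ℕ}
    (S : Set (Fin n → F)) (d : ℕ) : Prop :=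
  IsLeast {w | ∃ x ∈ S, x ≠ 0 ∧ hammingNorm x = w} d

open Finset Polynomial

/-!
Write `N x = x ^ (q + 1)` for the norm of `𝔽_{q²}` over `𝔽_q` and pick `Γ = {0, γ₁, γ₂, γ₃} ⊆ 𝔽_q`.
The code extends the generalized Reed–Solomon code spanned by the rows `(w_x x ^ a)_x`, `a < 3 + i`,
on the `3 (q + 1) + 1` points `x ∈ N⁻¹(Γ)`, so it has dimension `3 + i` and distance at least
`n + 1 - (3 + i)`.
Summing `x ^ e` over a fibre `N⁻¹(c)` gives `c ^ (e / (q + 1))` if `q + 1 ∣ e` and `0` otherwise,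
so with `N(w_x) = φ(N x)` the Hermitian product of rows `a` and `b` is
`∑_{c ∈ Γ} φ(c) c ^ ((a + q b) / (q + 1))` when `q + 1 ∣ a + q b`, and `0` otherwise.
For `a, b ≤ q + 2` that exponent lies in `{0, 1, 2, q, q + 1}` unless `a = b ≥ 3`, and taking for
`φ` the Lagrange nodal weights of `Γ` kills the sum there, because `∑_{c ∈ Γ} φ(c) c ^ j = 0` for
`j ≤ 2` and `c ^ q = c`. The surviving diagonal products lie in `𝔽_q`, hence equal `-N(μ_a)`
for some `μ_a`, and `i` extra columns `diag μ` under the last `i` rows cancel them.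
-/

theorem Lagrange.sum_nodalWeight_mul_pow_eq_zero {F ι : Type*} [Field F] [DecidableEq ι]
    {s : Finset ι} {v : ι → F} (hvs : Set.InjOn v s) {j : ℕ} (hj : j + 1 < #s) :
    ∑ i ∈ s, Lagrange.nodalWeight s v i * v i ^ j = 0 := by
  have h := Lagrange.coeff_eq_sum hvs (P := X ^ j)
    (by rw [degree_X_pow]; exact_mod_cast (by omega : j < #s))
  rw [coeff_X_pow, if_neg (by omega)] at h
  simp only [eval_pow, eval_X] at h
  rw [h]
  refine sum_congr rfl fun i _ => ?_
  rw [Lagrange.nodalWeight, prod_inv_distrib, div_eq_mul_inv, mul_comm]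

theorem Lagrange.nodalWeight_pow_expChar_pow {F ι : Type*} [Field F] [DecidableEq ι] {p : ℕ}
    [ExpChar F p] {m : ℕ} {s : Finset ι} {v : ι → F} (hv : ∀ j ∈ s, v j ^ p ^ m = v j) {i : ι}
    (hi : i ∈ s) :
    Lagrange.nodalWeight s v i ^ p ^ m = Lagrange.nodalWeight s v i := by
  simp only [Lagrange.nodalWeight, ← iterateFrobenius_def, map_prod, map_inv₀, map_sub]
  refine prod_congr rfl fun j hj => ?_
  rw [iterateFrobenius_def, iterateFrobenius_def, hv i hi, hv j (mem_of_mem_erase hj)]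

theorem add_mul_div_succ_mem_of_dvd {q a b : ℕ} (hq : 0 < q) (ha : a ≤ q + 2) (hb : b ≤ q + 2)
    (hab : ¬(a = b ∧ 3 ≤ a)) (hdvd : q + 1 ∣ a + q * b) :
    (a + q * b) / (q + 1) ∈ ({0, 1, 2, q, q + 1} : Finset ℕ) := by
  obtain ⟨c, hc⟩ := hdvd
  rw [hc, Nat.mul_div_cancel_left _ q.succ_pos]
  have hcb : (a : ℤ) - b = (q + 1) * ((c : ℤ) - b) := by
    have : (a : ℤ) + q * b = (q + 1) * c := by exact_mod_cast hc
    linarith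
  have hd : (c : ℤ) - b ∈ ({-1, 0, 1} : Finset ℤ) := by
    zify at ha hb hq
    have h1 : (c : ℤ) - b < 2 := by
      by_contra! h
      nlinarith [mul_le_mul_of_nonneg_left h (by linarith : (0 : ℤ) ≤ q + 1)]
    have h2 : -2 < (c : ℤ) - b := by
      by_contra! h
      nlinarith [mul_le_mul_of_nonneg_left h (by linarith : (0 : ℤ) ≤ q + 1)]
    simp only [mem_insert, mem_singleton]
    omega
  simp only [mem_insert, mem_singleton] at hd ⊢
  rcases hd with hd | hd | hd <;> rw [hd] at hcb <;> omega

section Roots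

variable {F : Type*} [Field F] [Fintype F] [DecidableEq F]

theorem IsPrimitiveRoot.filter_pow_eq_pow_eq_image {ζ x₀ : F} {k : ℕ} [NeZero k]
    (hζ : IsPrimitiveRoot ζ k) (hx₀ : x₀ ≠ 0) :
    ({x | x ^ k = x₀ ^ k} : Finset F) = (range k).image (ζ ^ · * x₀) := by
  ext x
  simp only [mem_filter, mem_univ, true_and, mem_image, mem_range]
  constructor
  · intro hx
    obtain ⟨j, hj, hζj⟩ := hζ.eq_pow_of_pow_eq_one (ξ := x / x₀) (by
      rw [div_pow, hx, div_self (pow_ne_zero _ hx₀)])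
    exact ⟨j, hj, by rw [hζj, div_mul_cancel₀ _ hx₀]⟩
  · rintro ⟨j, -, rfl⟩
    rw [mul_pow, ← pow_mul, mul_comm j, pow_mul, hζ.pow_eq_one, one_pow, one_mul]

theorem IsPrimitiveRoot.card_filter_pow_eq_pow {ζ x₀ : F} {k : ℕ} [NeZero k]
    (hζ : IsPrimitiveRoot ζ k) (hx₀ : x₀ ≠ 0) : #{x | x ^ k = x₀ ^ k} = k := by
  rw [hζ.filter_pow_eq_pow_eq_image hx₀, card_image_of_injOn (hζ.injOn_pow_mul hx₀), card_range]

theorem IsPrimitiveRoot.sum_filter_pow_eq_pow {ζ x₀ : F} {k : ℕ} [NeZero k]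
    (hζ : IsPrimitiveRoot ζ k) (hx₀ : x₀ ≠ 0) (e : ℕ) :
    ∑ x with x ^ k = x₀ ^ k, x ^ e = if k ∣ e then (k : F) * x₀ ^ e else 0 := by
  rw [hζ.filter_pow_eq_pow_eq_image hx₀, sum_image (hζ.injOn_pow_mul hx₀)]
  simp_rw [mul_pow, ← pow_mul, mul_comm _ e, pow_mul, ← sum_mul]
  split_ifs with he
  · rw [(hζ.pow_eq_one_iff_dvd e).mpr he]
    simp
  · have hne : ζ ^ e ≠ 1 := fun h => he ((hζ.pow_eq_one_iff_dvd e).mp h)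
    rw [geom_sum_eq hne, ← pow_mul, mul_comm e k, pow_mul, hζ.pow_eq_one, one_pow, sub_self,
      zero_div, zero_mul]

end Roots

section NormFibres

variable {F : Type*} [Field F] [Fintype F] {q : ℕ}

theorem two_le_of_card_eq_sq (hF : Fintype.card F = q ^ 2) : 2 ≤ q := by
  have h := Fintype.one_lt_card (α := F)
  rw [hF] at h
  by_contra! hq
  interval_cases q <;> simp at h

theorem natCast_eq_zero_of_card_eq_sq (hF : Fintype.card F = q ^ 2) : (q : F) = 0 := by
  have h := FiniteField.cast_card_eq_zero F
  rw [hF, Nat.cast_pow] at h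
  exact pow_eq_zero_iff two_ne_zero |>.mp h

theorem exists_isPrimitiveRoot_of_card_eq_sq (hF : Fintype.card F = q ^ 2) :
    ∃ g : F, IsPrimitiveRoot g ((q + 1) * (q - 1)) := by
  classical
  obtain ⟨g, hg⟩ := IsCyclic.exists_ofOrder_eq_natCard (α := Fˣ)
  refine ⟨g, ?_⟩
  rw [IsPrimitiveRoot.coe_units_iff, IsPrimitiveRoot.iff_orderOf, hg, Nat.card_eq_fintype_card,
    Fintype.card_units, hF, ← Nat.sq_sub_sq, one_pow]

theorem exists_isPrimitiveRoot_succ_of_card_eq_sq (hF : Fintype.card F = q ^ 2) :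
    ∃ ζ : F, IsPrimitiveRoot ζ (q + 1) := by
  obtain ⟨g, hg⟩ := exists_isPrimitiveRoot_of_card_eq_sq hF
  have := two_le_of_card_eq_sq hF
  exact ⟨g ^ (q - 1), hg.pow (Nat.mul_pos (by omega) (by omega)) (mul_comm _ _)⟩

theorem exists_pow_succ_eq (hF : Fintype.card F = q ^ 2) {c : F} (hc : c ^ q = c) :
    ∃ x : F, x ^ (q + 1) = c := by
  rcases eq_or_ne c 0 with rfl | hc0
  · exact ⟨0, zero_pow q.succ_ne_zero⟩
  have hq := two_le_of_card_eq_sq hF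
  obtain ⟨g, hg⟩ := exists_isPrimitiveRoot_of_card_eq_sq hF
  have hc1 : c ^ (q - 1) = 1 := by
    apply mul_right_cancel₀ hc0
    rw [← pow_succ, Nat.sub_add_cancel (by omega), hc, one_mul]
  have : NeZero ((q + 1) * (q - 1)) := ⟨Nat.mul_ne_zero (by omega) (by omega)⟩
  obtain ⟨s, -, rfl⟩ := hg.eq_pow_of_pow_eq_one (ξ := c) (by rw [mul_comm, pow_mul, hc1, one_pow])
  obtain ⟨t, rfl⟩ : q + 1 ∣ s := by
    have := (hg.pow_eq_one_iff_dvd _).mp (by rw [pow_mul, hc1])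
    exact Nat.dvd_of_mul_dvd_mul_right (by omega) this
  exact ⟨g ^ t, by rw [← pow_mul, mul_comm]⟩

variable [DecidableEq F]

theorem card_filter_pow_succ_eq (hF : Fintype.card F = q ^ 2) {c : F} (hc : c ^ q = c)
    (hc0 : c ≠ 0) : #{x | x ^ (q + 1) = c} = q + 1 := by
  obtain ⟨x₀, rfl⟩ := exists_pow_succ_eq hF hc
  obtain ⟨ζ, hζ⟩ := exists_isPrimitiveRoot_succ_of_card_eq_sq hF
  exact hζ.card_filter_pow_eq_pow fun h => hc0 (by simp [h])

theorem sum_filter_pow_succ_eq (hF : Fintype.card F = q ^ 2) {c : F} (hc : c ^ q = c) (e : ℕ) :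
    ∑ x with x ^ (q + 1) = c, x ^ e = if q + 1 ∣ e then c ^ (e / (q + 1)) else 0 := by
  rcases eq_or_ne c 0 with rfl | hc0
  · have hfib : ({x | x ^ (q + 1) = 0} : Finset F) = {0} := by ext x; simp
    rw [hfib, sum_singleton]
    split_ifs with he
    · obtain ⟨t, rfl⟩ := he
      rw [Nat.mul_div_cancel_left _ q.succ_pos, pow_mul, zero_pow q.succ_ne_zero]
    · exact zero_pow fun h => he (h ▸ dvd_zero _)
  obtain ⟨x₀, rfl⟩ := exists_pow_succ_eq hF hc
  obtain ⟨ζ, hζ⟩ := exists_isPrimitiveRoot_succ_of_card_eq_sq hF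
  rw [hζ.sum_filter_pow_eq_pow (fun h => hc0 (by simp [h])) e]
  split_ifs with he
  · rw [Nat.cast_succ, natCast_eq_zero_of_card_eq_sq hF, zero_add, one_mul, ← pow_mul,
      Nat.mul_div_cancel' he]
  · rfl

theorem filter_filter_pow_succ_mem {Γ : Finset F} {c : F} (hc : c ∈ Γ) :
    ((univ.filter fun x : F => x ^ (q + 1) ∈ Γ).filter fun x => x ^ (q + 1) = c) =
      univ.filter fun x => x ^ (q + 1) = c := by
  ext x
  simp only [mem_filter, mem_univ, true_and, and_iff_right_iff_imp]
  rintro rfl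
  exact hc

theorem card_filter_pow_succ_mem (hF : Fintype.card F = q ^ 2) {Γ : Finset F}
    (hΓ : ∀ c ∈ Γ, c ^ q = c) (h0 : 0 ∈ Γ) :
    #{x | x ^ (q + 1) ∈ Γ} = (q + 1) * (#Γ - 1) + 1 := by
  rw [card_eq_sum_card_fiberwise (f := (· ^ (q + 1))) (s := univ.filter fun x => x ^ (q + 1) ∈ Γ)
      (t := Γ) fun x hx => (mem_filter.mp hx).2,
    sum_congr rfl fun c hc => by rw [filter_filter_pow_succ_mem hc], ← add_sum_erase _ _ h0,
    sum_congr rfl fun c hc => card_filter_pow_succ_eq hF (hΓ c (mem_of_mem_erase hc))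
      (ne_of_mem_erase hc)]
  have hfib : ({x | x ^ (q + 1) = 0} : Finset F) = {0} := by ext x; simp
  rw [hfib, card_singleton, sum_const, smul_eq_mul, card_erase_of_mem h0]
  ring

theorem sum_filter_pow_succ_mem (hF : Fintype.card F = q ^ 2) {Γ : Finset F}
    (hΓ : ∀ c ∈ Γ, c ^ q = c) (φ : F → F) (e : ℕ) :
    ∑ x with x ^ (q + 1) ∈ Γ, φ (x ^ (q + 1)) * x ^ e =
      if q + 1 ∣ e then ∑ c ∈ Γ, φ c * c ^ (e / (q + 1)) else 0 := by
  rw [← sum_fiberwise_of_maps_to (g := (· ^ (q + 1))) (t := Γ) fun x hx => (mem_filter.mp hx).2]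
  have hfib : ∀ c ∈ Γ, ∑ x ∈ (univ.filter fun x : F => x ^ (q + 1) ∈ Γ).filter
      (fun x => x ^ (q + 1) = c), φ (x ^ (q + 1)) * x ^ e =
      φ c * if q + 1 ∣ e then c ^ (e / (q + 1)) else 0 := by
    intro c hc
    rw [filter_filter_pow_succ_mem hc, ← sum_filter_pow_succ_eq hF (hΓ c hc), mul_sum]
    exact sum_congr rfl fun x hx => by rw [(mem_filter.mp hx).2]
  rw [sum_congr rfl hfib]
  split_ifs <;> simp

theorem exists_finset_card_eq_four_of_pow_eq_self (hF : Fintype.card F = q ^ 2) (hq : 4 ≤ q) :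
    ∃ Γ : Finset F, 0 ∈ Γ ∧ #Γ = 4 ∧ ∀ c ∈ Γ, c ^ q = c := by
  obtain ⟨g, hg⟩ := exists_isPrimitiveRoot_of_card_eq_sq hF
  have hh : IsPrimitiveRoot (g ^ (q + 1)) (q - 1) := hg.pow (Nat.mul_pos (by omega) (by omega)) rfl
  generalize g ^ (q + 1) = h at hh
  refine ⟨insert 0 ((range 3).image (h ^ ·)), mem_insert_self _ _, ?_, ?_⟩
  · rw [card_insert_of_notMem, card_image_of_injOn, card_range]
    · exact hh.injOn_pow.mono (by rw [coe_subset, range_subset_range]; omega)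
    · simp only [mem_image, not_exists, not_and]
      intro j _ h
      exact pow_ne_zero j (hh.ne_zero (by omega)) h
  · simp only [mem_insert, mem_image, mem_range]
    rintro c (rfl | ⟨j, -, rfl⟩)
    · exact zero_pow (by omega)
    · rw [← pow_mul, mul_comm, pow_mul, ← Nat.sub_add_cancel (by omega : 1 ≤ q), pow_succ,
        hh.pow_eq_one, one_mul]

end NormFibres

section Hermitian

variable {F : Type} [Field F]

theorem hermInner_append {q n n' : ℕ} (x y : Fin n → F) (x' y' : Fin n' → F) :
    hermInner q (Fin.append x x') (Fin.append y y') = hermInner q x y + hermInner q x' y' := by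
  simp [hermInner, Fin.sum_univ_add]

theorem hermInner_zero_left {q n : ℕ} (y : Fin n → F) : hermInner q 0 y = 0 := by
  simp [hermInner]

theorem hermInner_zero_right {q n : ℕ} (hq : q ≠ 0) (x : Fin n → F) : hermInner q x 0 = 0 := by
  simp [hermInner, zero_pow hq]

theorem hermInner_single_single {q n : ℕ} (hq : q ≠ 0) (r r' : Fin n) (x y : F) :
    hermInner q (Pi.single r x) (Pi.single r' y) = if r = r' then x * y ^ q else 0 := by
  rw [hermInner, sum_eq_single r (fun s _ hs => by simp [hs]) (by simp)]
  split_ifs with h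
  · simp [h]
  · simp [Ne.symm h, zero_pow hq]

theorem hermInner_sum_smul_left {q n : ℕ} {ι : Type*} [Fintype ι] (c : ι → F)
    (v : ι → Fin n → F) (y : Fin n → F) :
    hermInner q (∑ a, c a • v a) y = ∑ a, c a * hermInner q (v a) y := by
  simp only [hermInner, Finset.sum_apply, Pi.smul_apply, smul_eq_mul, mul_sum, sum_mul]
  rw [sum_comm]
  exact sum_congr rfl fun _ _ => sum_congr rfl fun _ _ => mul_assoc _ _ _

variable {p : ℕ} [ExpChar F p] (m : ℕ)

theorem hermInner_sum_smul_right {n : ℕ} {ι : Type*} [Fintype ι] (x : Fin n → F) (d : ι → F)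
    (v : ι → Fin n → F) :
    hermInner (p ^ m) x (∑ b, d b • v b) = ∑ b, d b ^ p ^ m * hermInner (p ^ m) x (v b) := by
  simp only [hermInner, Finset.sum_apply, Pi.smul_apply, smul_eq_mul, sum_pow_char_pow, mul_pow,
    mul_sum]
  rw [sum_comm]
  exact sum_congr rfl fun _ _ => sum_congr rfl fun _ _ => by ring

theorem isHermSelfOrth_span {n : ℕ} {ι : Type*} [Fintype ι] (v : ι → Fin n → F)
    (hv : ∀ a b, hermInner (p ^ m) (v a) (v b) = 0) :
    IsHermSelfOrth (p ^ m) (Submodule.span F (Set.range v)) := by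
  intro y hy x hx
  obtain ⟨d, rfl⟩ := (Submodule.mem_span_range_iff_exists_fun F).mp hy
  obtain ⟨c, rfl⟩ := (Submodule.mem_span_range_iff_exists_fun F).mp hx
  simp [hermInner_sum_smul_left, hermInner_sum_smul_right, hv]

theorem hermInner_self_pow_expChar_pow [Fintype F] {n : ℕ} (hF : Fintype.card F = (p ^ m) ^ 2)
    (x : Fin n → F) : hermInner (p ^ m) x x ^ p ^ m = hermInner (p ^ m) x x := by
  simp only [hermInner, sum_pow_char_pow, mul_pow, ← pow_mul, ← sq, ← hF, FiniteField.pow_card]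
  exact sum_congr rfl fun _ _ => mul_comm _ _

end Hermitian

section Codes

variable {F : Type} [Field F] {n : ℕ}

/-- Row `a` of the generator matrix of the generalized Reed–Solomon code with evaluation points
`Q` and column multipliers `w`. -/
def grsRow (Q w : Fin n → F) (a : ℕ) : Fin n → F := fun s => w s * Q s ^ a

theorem hermInner_grsRow (q : ℕ) (Q w : Fin n → F) (a b : ℕ) :
    hermInner q (grsRow Q w a) (grsRow Q w b) = ∑ s, w s ^ (q + 1) * Q s ^ (a + q * b) := by
  refine sum_congr rfl fun s _ => ?_
  simp only [grsRow]
  ring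

variable [DecidableEq F]

theorem sum_smul_grsRow {k : ℕ} (Q w : Fin n → F) (c : Fin k → F) :
    ∑ a, c a • grsRow Q w a = fun s => w s * (ofFn k c).eval (Q s) := by
  ext s
  simp only [Finset.sum_apply, Pi.smul_apply, smul_eq_mul, grsRow, ofFn_eq_sum_monomial,
    eval_finsetSum, eval_monomial, mul_sum]
  exact sum_congr rfl fun _ _ => by ring

theorem le_hammingNorm_sum_smul_grsRow {Q w : Fin n → F} (hQ : Function.Injective Q)
    (hw : ∀ s, w s ≠ 0) {k : ℕ} {c : Fin k → F} (hc : c ≠ 0) :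
    n + 1 - k ≤ hammingNorm (∑ a, c a • grsRow Q w a) := by
  rw [sum_smul_grsRow, hammingNorm]
  simp only [ne_eq, mul_eq_zero, hw, false_or]
  set f := ofFn k c
  have hf : f ≠ 0 := fun h => hc (injective_ofFn k (h.trans (ofFn_zero k).symm))
  have hdeg : f.natDegree < k := ofFn_natDegree_lt (Nat.one_le_iff_ne_zero.mpr
    (ne_zero_of_ofFn_ne_zero hf)) c
  have hroots : #{s | f.eval (Q s) = 0} ≤ f.natDegree := by
    rw [← card_image_of_injective _ hQ]
    refine card_le_degree_of_subset_roots fun x hx => ?_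
    obtain ⟨s, hs, rfl⟩ := mem_image.mp (mem_val.mp hx)
    exact (mem_roots hf).mpr (mem_filter.mp hs).2
  have hsplit := card_filter_add_card_filter_not (s := univ) fun s => f.eval (Q s) = 0
  rw [card_univ, Fintype.card_fin] at hsplit
  omega

theorem hammingNorm_comp_le {ι ι' : Type*} [Fintype ι] [Fintype ι'] (x : ι → F) {f : ι' → ι}
    (hf : Function.Injective f) : hammingNorm (x ∘ f) ≤ hammingNorm x :=
  card_le_card_of_injOn f (fun s hs => by simpa using hs) hf.injOn

variable {Q w : Fin n → F} {k i : ℕ} {R : Fin k → Fin (n + i) → F}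

theorem le_hammingNorm_sum_smul (hQ : Function.Injective Q) (hw : ∀ s, w s ≠ 0)
    (hR : ∀ a, R a ∘ Fin.castAdd i = grsRow Q w a) {c : Fin k → F} (hc : c ≠ 0) :
    n + 1 - k ≤ hammingNorm (∑ a, c a • R a) := by
  have hres : (∑ a, c a • R a) ∘ Fin.castAdd i = ∑ a, c a • grsRow Q w a := by
    ext s
    simp [Finset.sum_apply, ← hR]
  exact (le_hammingNorm_sum_smul_grsRow hQ hw hc).trans
    (hres ▸ hammingNorm_comp_le _ (Fin.castAdd_injective n i))

theorem linearIndependent_of_comp_castAdd (hQ : Function.Injective Q) (hw : ∀ s, w s ≠ 0)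
    (hR : ∀ a, R a ∘ Fin.castAdd i = grsRow Q w a) (hk : k ≤ n) : LinearIndependent F R := by
  refine Fintype.linearIndependent_iff.mpr fun c hc => ?_
  by_contra! hc0
  have := le_hammingNorm_sum_smul hQ hw hR (Function.ne_iff.mpr hc0)
  rw [hc, hammingNorm_zero] at this
  omega

theorem exists_hasMinDist_ge {C : Submodule F (Fin n → F)} (hC : C ≠ ⊥) {b : ℕ}
    (hb : ∀ x ∈ C, x ≠ 0 → b ≤ hammingNorm x) :
    ∃ d, b ≤ d ∧ HasMinDist (C : Set (Fin n → F)) d := by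
  obtain ⟨x, hx, hx0⟩ := Submodule.exists_mem_ne_zero_of_ne_bot hC
  have hne : {w | ∃ x ∈ (C : Set (Fin n → F)), x ≠ 0 ∧ hammingNorm x = w}.Nonempty :=
    ⟨_, x, hx, hx0, rfl⟩
  obtain ⟨y, hy, hy0, hyd⟩ := Nat.sInf_mem hne
  exact ⟨_, hyd ▸ hb y hy hy0, Nat.sInf_mem hne, fun _ hw => Nat.sInf_le hw⟩

theorem finrank_span_of_comp_castAdd (hQ : Function.Injective Q) (hw : ∀ s, w s ≠ 0)
    (hR : ∀ a, R a ∘ Fin.castAdd i = grsRow Q w a) (hk : k ≤ n) :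
    Module.finrank F (Submodule.span F (Set.range R)) = k := by
  rw [finrank_span_eq_card (linearIndependent_of_comp_castAdd hQ hw hR hk), Fintype.card_fin]

theorem exists_hasMinDist_span_ge (hQ : Function.Injective Q) (hw : ∀ s, w s ≠ 0)
    (hR : ∀ a, R a ∘ Fin.castAdd i = grsRow Q w a) (hk : k ≤ n) (hk0 : 0 < k) :
    ∃ d, n + 1 - k ≤ d ∧ HasMinDist (Submodule.span F (Set.range R) : Set (Fin (n + i) → F)) d := by
  refine exists_hasMinDist_ge (fun h => ?_) fun x hx hx0 => ?_
  · exact (linearIndependent_of_comp_castAdd hQ hw hR hk).ne_zero ⟨0, hk0⟩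
      (Submodule.span_eq_bot.mp h _ ⟨_, rfl⟩)
  · obtain ⟨c, rfl⟩ := (Submodule.mem_span_range_iff_exists_fun F).mp hx
    refine le_hammingNorm_sum_smul hQ hw hR fun hc => hx0 ?_
    simp [hc]

end Codes

section Extension

variable {F : Type} [Field F] {l i n : ℕ}

/-- Rows of the generator matrix `[V | D]`, where `V` has rows `v` and `D` is the
`(l + i) × i` matrix that is zero on its first `l` rows and `diag μ` below. -/
def appendDiag (v : Fin (l + i) → Fin n → F) (μ : Fin i → F) (a : Fin (l + i)) :
    Fin (n + i) → F :=
  Fin.append (v a) (Fin.append (fun _ => 0) (fun r => Pi.single r (μ r)) a)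

theorem appendDiag_comp_castAdd (v : Fin (l + i) → Fin n → F) (μ : Fin i → F)
    (a : Fin (l + i)) : appendDiag v μ a ∘ Fin.castAdd i = v a :=
  funext <| Fin.append_left _ _

theorem exists_hermInner_appendDiag_eq_zero [Fintype F] {p : ℕ} [ExpChar F p] {m : ℕ}
    (hF : Fintype.card F = (p ^ m) ^ 2) (v : Fin (l + i) → Fin n → F)
    (hv : ∀ a b : Fin (l + i), ¬(a = b ∧ l ≤ (a : ℕ)) → hermInner (p ^ m) (v a) (v b) = 0) :
    ∃ μ : Fin i → F, ∀ a b, hermInner (p ^ m) (appendDiag v μ a) (appendDiag v μ b) = 0 := by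
  have hq : p ^ m ≠ 0 := (expChar_pow_pos F p m).ne'
  have hfix : ∀ r : Fin i, (-hermInner (p ^ m) (v (Fin.natAdd l r)) (v (Fin.natAdd l r))) ^ p ^ m =
      -hermInner (p ^ m) (v (Fin.natAdd l r)) (v (Fin.natAdd l r)) := fun r => by
    rw [← iterateFrobenius_def, map_neg, iterateFrobenius_def, hermInner_self_pow_expChar_pow m hF]
  choose μ hμ using fun r => exists_pow_succ_eq hF (hfix r)
  refine ⟨μ, fun a b => ?_⟩
  rw [appendDiag, appendDiag, hermInner_append]
  induction a using Fin.addCases with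
  | left a =>
    rw [Fin.append_left, hermInner_zero_left, add_zero]
    exact hv _ _ fun h => absurd h.2 (by simp)
  | right r =>
    induction b using Fin.addCases with
    | left b =>
      rw [Fin.append_left, hermInner_zero_right hq, add_zero]
      exact hv _ _ fun h => absurd (congrArg Fin.val h.1) (by simp; omega)
    | right r' =>
      rw [Fin.append_right, Fin.append_right, hermInner_single_single hq]
      by_cases h : r = r'
      · rw [if_pos h, ← h, ← pow_succ', hμ, add_neg_cancel]
      · rw [if_neg h, add_zero]
        exact hv _ _ fun h' => h ((Fin.natAdd_inj l).mp h'.1)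

end Extension

theorem exists_grsRow_hermInner_eq_zero {F : Type} [Field F] [Fintype F] [DecidableEq F]
    {p : ℕ} [ExpChar F p] {m : ℕ} (hF : Fintype.card F = (p ^ m) ^ 2) (hq : 4 ≤ p ^ m) :
    ∃ Q w : Fin (3 * (p ^ m + 1) + 1) → F, Function.Injective Q ∧ (∀ s, w s ≠ 0) ∧
      ∀ a b, a ≤ p ^ m + 2 → b ≤ p ^ m + 2 → ¬(a = b ∧ 3 ≤ a) →
        hermInner (p ^ m) (grsRow Q w a) (grsRow Q w b) = 0 := by
  set q := p ^ m
  obtain ⟨Γ, h0, hcard, hΓ⟩ := exists_finset_card_eq_four_of_pow_eq_self hF hq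
  set φ := Lagrange.nodalWeight Γ id
  have hT : ∀ j ∈ ({0, 1, 2, q, q + 1} : Finset ℕ), ∑ c ∈ Γ, φ c * c ^ j = 0 := by
    have hlow : ∀ j < 3, ∑ c ∈ Γ, φ c * c ^ j = 0 := fun j hj =>
      Lagrange.sum_nodalWeight_mul_pow_eq_zero (Set.injOn_id _) (by omega)
    simp only [mem_insert, mem_singleton]
    rintro j (rfl | rfl | rfl | rfl | rfl)
    · exact hlow 0 (by norm_num)
    · exact hlow 1 (by norm_num)
    · exact hlow 2 (by norm_num)
    · rw [← hlow 1 (by norm_num)]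
      exact sum_congr rfl fun c hc => by rw [hΓ c hc, pow_one]
    · rw [← hlow 2 (by norm_num)]
      exact sum_congr rfl fun c hc => by rw [pow_succ, hΓ c hc, sq]
  have hP : #(univ.filter fun x : F => x ^ (q + 1) ∈ Γ) = 3 * (q + 1) + 1 := by
    rw [card_filter_pow_succ_mem hF hΓ h0, hcard]
    ring
  set e := (univ.filter fun x : F => x ^ (q + 1) ∈ Γ).equivFinOfCardEq hP
  set Q : Fin (3 * (q + 1) + 1) → F := fun s => e.symm s
  have hQΓ : ∀ s, Q s ^ (q + 1) ∈ Γ := fun s => (mem_filter.mp (e.symm s).2).2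
  choose w hw using fun s =>
    exists_pow_succ_eq hF (Lagrange.nodalWeight_pow_expChar_pow (v := id) hΓ (hQΓ s))
  refine ⟨Q, w, Subtype.val_injective.comp e.symm.injective, fun s hs => ?_,
    fun a b ha hb hab => ?_⟩
  · refine Lagrange.nodalWeight_ne_zero (Set.injOn_id _) (hQΓ s) ?_
    rw [← hw s, hs, zero_pow q.succ_ne_zero]
  rw [hermInner_grsRow]
  simp_rw [hw]
  have hsum : ∑ s, φ (Q s ^ (q + 1)) * Q s ^ (a + q * b) =
      ∑ x with x ^ (q + 1) ∈ Γ, φ (x ^ (q + 1)) * x ^ (a + q * b) :=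
    (e.symm.sum_comp (fun x => φ ((x : F) ^ (q + 1)) * (x : F) ^ (a + q * b))).trans
      (sum_coe_sort _ fun x => φ (x ^ (q + 1)) * x ^ (a + q * b))
  rw [hsum, sum_filter_pow_succ_mem hF hΓ]
  split_ifs with hdvd
  · exact hT _ (add_mul_div_succ_mem_of_dvd (by omega) ha hb hab hdvd)
  · rfl

/-- if `3 ∣ q-1` or `4 ∣ q-1` and `n = 3(q+1)+1`, then for every
`1 ≤ i ≤ q` there is a Hermitian self-orthogonal `[n+i, 3+i, d]` code over `F_{q²}`
with `d ≥ n-2-i`. -/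
theorem herm_self_orth_three_cosets_family
    (q : ℕ) (hq : IsPrimePow q) (hdvd : 3 ∣ q - 1 ∨ 4 ∣ q - 1)
    (n : ℕ) (hn : n = 3 * (q + 1) + 1)
    (F : Type) [Field F] [Fintype F] [DecidableEq F]
    (hF : Fintype.card F = q ^ 2) :
    ∀ i : ℕ, 1 ≤ i → i ≤ q →
      ∃ C : Submodule F (Fin (n + i) → F),
        IsHermSelfOrth q C ∧ Module.finrank F C = 3 + i ∧
          ∃ d : ℕ, n - 2 - i ≤ d ∧
            HasMinDist (C : Set (Fin (n + i) → F)) d := by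
  rintro i - hiq
  obtain ⟨p, m, hp, -, rfl⟩ := hq
  have : Fact p.Prime := ⟨hp.nat_prime⟩
  have : CharP F p := charP_of_card_eq_prime_pow (f := m * 2) (by rw [hF, pow_mul])
  have hq4 : 4 ≤ p ^ m := by have := two_le_of_card_eq_sq hF; omega
  subst hn
  obtain ⟨Q, w, hQ, hw, hgram⟩ := exists_grsRow_hermInner_eq_zero hF hq4
  obtain ⟨μ, hμ⟩ := exists_hermInner_appendDiag_eq_zero hF (l := 3) (i := i)
    (fun a => grsRow Q w a) fun a b hab =>
      hgram a b (by omega) (by omega) (by simpa [Fin.ext_iff] using hab)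
  have hR := appendDiag_comp_castAdd (fun a : Fin (3 + i) => grsRow Q w a) μ
  refine ⟨_, isHermSelfOrth_span m _ hμ, finrank_span_of_comp_castAdd hQ hw hR (by omega), ?_⟩
  obtain ⟨d, hd, hmin⟩ := exists_hasMinDist_span_ge hQ hw hR (by omega) (by omega)
  exact ⟨d, by omega, hmin⟩
end

section
/- Let q be an odd prime power, n = 2(q+1)+1, and k = ⌊(n+q−1)/(q+1)⌋ (so k = 2). Then for every integer i with 1 ≤ i ≤ q there exist MDS Hermitian (k+i−⌊(i−1)/2⌋−1)-dim hull codes over F_{q^2} with parameters [n, k+i, n−k−i+1] and [n, n−k−i, k+i+1]. -/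
/-!
The codes are generalized Reed–Solomon codes `GRS_m(a, v)`, `m = i + 2`, evaluated at `0` and at
the `2(q+1)`-th roots of unity of `F_{q²}` (these exist since `2(q+1) ∣ q² - 1` for odd `q`), with
column multipliers satisfying `v^(q+1) = -1` at `0` and `v^(q+1) = 1/2` at the roots of unity
(the norm `F_{q²}ˣ → F_qˣ` is onto). Summing powers of roots of unity, the Hermitian Gram matrix
of the basis `g_t = (v_j a_j^t)_j` is diagonal, with `⟨g_t, g_t⟩ = 1` for even `t ≠ 0` and `0`
otherwise; so the hull is spanned by `g_0` and the `g_t` with `t` odd, of dimension `⌊m/2⌋ + 1`.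
GRS codes are MDS, and so is their Hermitian dual (a light codeword in the dual would be caught by
a Lagrange basis polynomial); since taking Hermitian duals is an involution, both codes have the
same hull.
-/

open Polynomial Module Finset Function

section SesqForm

variable {F : Type} [Field F] {n : ℕ}

variable (σ : F →+* F) in
/-- For `σ = (· ^ q)` on `F_{q²}` this is the Hermitian form, and `hermDual q C` is
`C.orthogonalBilin (sesqForm σ)`. -/
def sesqForm : (Fin n → F) →ₗ[F] (Fin n → F) →ₛₗ[σ] F :=
  LinearMap.mk₂'ₛₗ (RingHom.id F) σ (fun x y => ∑ i, x i * σ (y i))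
    (fun x x' y => by simp only [Pi.add_apply, add_mul, sum_add_distrib])
    (fun c x y => by simp only [Pi.smul_apply, smul_eq_mul, mul_sum, mul_assoc, RingHom.id_apply])
    (fun x y y' => by simp only [Pi.add_apply, map_add, mul_add, sum_add_distrib])
    (fun c x y => by
      simp only [Pi.smul_apply, smul_eq_mul, map_mul, mul_sum]
      exact sum_congr rfl fun i _ => by ring)

@[simp]
lemma sesqForm_apply (σ : F →+* F) (x y : Fin n → F) :
    sesqForm σ x y = ∑ i, x i * σ (y i) := rfl

variable {σ : F →+* F}

lemma sesqForm_swap (hσ : Involutive σ) (x y : Fin n → F) :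
    sesqForm σ y x = σ (sesqForm σ x y) := by
  simp only [sesqForm_apply, map_sum, map_mul, hσ _, mul_comm]

lemma isRefl_sesqForm (hσ : Involutive σ) : (sesqForm σ : (Fin n → F) →ₗ[F] _).IsRefl :=
  fun x y h => by rw [sesqForm_swap hσ, h, map_zero]

lemma finrank_orthogonalBilin_sesqForm (hσ : Involutive σ) (C : Submodule F (Fin n → F)) :
    finrank F (C.orthogonalBilin (sesqForm σ)) = n - finrank F C := by
  set B := Matrix.toBilin' (1 : Matrix (Fin n) (Fin n) F)
  have hB : B.Nondegenerate :=
    LinearMap.BilinForm.nondegenerate_toBilin'_of_det_ne_zero' _ (by simp)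
  have hmem (y : Fin n → F) :
      y ∈ C.orthogonalBilin (sesqForm σ) ↔ (σ ∘ y) ∈ B.orthogonal C := by
    simp [B, LinearMap.BilinForm.mem_orthogonal_iff, Matrix.toBilin'_apply', dotProduct]
  -- `y ↦ σ ∘ y` is a `σ`-semilinear bijection onto the orthogonal for the dot product
  let e : C.orthogonalBilin (sesqForm σ) ≃+ B.orthogonal C :=
    { toFun y := ⟨σ ∘ y, (hmem y).1 y.2⟩
      invFun z := ⟨σ ∘ z, (hmem _).2 (by simp [comp_def, hσ _, z.2])⟩
      left_inv y := Subtype.ext (funext fun i => hσ (y.1 i))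
      right_inv z := Subtype.ext (funext fun i => hσ (z.1 i))
      map_add' y z := Subtype.ext (funext fun i => map_add σ _ _) }
  have hrank := rank_eq_of_equiv_equiv σ e hσ.bijective fun c y =>
    Subtype.ext (funext fun i => map_mul σ c (y.1 i))
  rw [finrank, hrank, ← finrank, LinearMap.BilinForm.finrank_orthogonal hB, finrank_fin_fun]

lemma orthogonalBilin_orthogonalBilin_sesqForm (hσ : Involutive σ)
    (C : Submodule F (Fin n → F)) :
    (C.orthogonalBilin (sesqForm σ)).orthogonalBilin (sesqForm σ) = C := by
  refine (Submodule.eq_of_le_of_finrank_eq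
    (Submodule.le_orthogonalBilin_orthogonalBilin (isRefl_sesqForm hσ)) ?_).symm
  rw [finrank_orthogonalBilin_sesqForm hσ, finrank_orthogonalBilin_sesqForm hσ]
  have := Submodule.finrank_le C
  rw [finrank_fin_fun] at this
  omega

lemma hermHullDim_eq_finrank_inf {q : ℕ} (hσq : ∀ x, σ x = x ^ q)
    (C : Submodule F (Fin n → F)) :
    hermHullDim q C = finrank F ↥(C ⊓ C.orthogonalBilin (sesqForm σ)) := by
  have hdual : hermDual q (C : Set (Fin n → F)) = C.orthogonalBilin (sesqForm σ) := by
    ext y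
    simp [hermDual, hermInner, hσq]
  rw [hermHullDim, hdual, ← Submodule.coe_inf, Submodule.span_eq]

lemma finrank_span_inf_orthogonalBilin_of_pairwise [DecidableEq F] {ι : Type*} [Fintype ι]
    {g : ι → Fin n → F} (hg : LinearIndependent F g)
    (horth : Pairwise fun s t => sesqForm σ (g s) (g t) = 0) :
    finrank F ↥(Submodule.span F (Set.range g) ⊓
        (Submodule.span F (Set.range g)).orthogonalBilin (sesqForm σ)) =
      #{s | sesqForm σ (g s) (g s) = 0} := by
  set I : Finset ι := {s | sesqForm σ (g s) (g s) = 0}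
  suffices hhull : Submodule.span F (Set.range g) ⊓
      (Submodule.span F (Set.range g)).orthogonalBilin (sesqForm σ) =
        Submodule.span F (Set.range (g ∘ ((↑) : I → ι))) by
    rw [hhull, finrank_span_eq_card (hg.comp _ Subtype.val_injective), Fintype.card_coe]
  apply le_antisymm
  · rintro x ⟨hx, hxorth⟩
    obtain ⟨c, rfl⟩ := (Submodule.mem_span_range_iff_exists_fun F).1 hx
    have hc (s : ι) (hs : s ∉ I) : c s = 0 := by
      have h := hxorth (g s) (Submodule.subset_span (Set.mem_range_self s))
      rw [map_sum, sum_eq_single s (fun t _ hts => by rw [map_smulₛₗ, horth hts.symm, smul_zero])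
        (fun h => (h (mem_univ s)).elim), map_smulₛₗ, smul_eq_mul] at h
      rw [mem_filter, not_and] at hs
      exact σ.injective <|
        ((mul_eq_zero.1 h).resolve_right (hs (mem_univ s))).trans σ.map_zero.symm
    rw [← sum_subset (subset_univ I) fun s _ hs => by rw [hc s hs, zero_smul], ← sum_coe_sort]
    exact Submodule.sum_mem _ fun s _ => Submodule.smul_mem _ _ (Submodule.subset_span ⟨s, rfl⟩)
  · rw [Submodule.span_le]
    rintro _ ⟨⟨s, hs⟩, rfl⟩
    refine ⟨Submodule.subset_span (Set.mem_range_self s), fun x hx => ?_⟩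
    obtain ⟨c, rfl⟩ := (Submodule.mem_span_range_iff_exists_fun F).1 hx
    rw [map_sum, LinearMap.sum_apply]
    refine sum_eq_zero fun t _ => ?_
    rw [map_smul, LinearMap.smul_apply, smul_eq_mul, comp_apply]
    obtain rfl | hts := eq_or_ne t s
    · rw [(mem_filter.1 hs).2, mul_zero]
    · rw [horth hts, mul_zero]

end SesqForm

section HammingWeight

variable {F : Type} [Field F] [DecidableEq F] {n : ℕ}

lemma hammingNorm_add_card_filter_eq_zero (x : Fin n → F) :
    hammingNorm x + #{j | x j = 0} = n := by
  simpa [hammingNorm, add_comm] using card_filter_add_card_filter_not (s := univ) (x · = 0)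

lemma exists_ne_zero_hammingNorm_le (D : Submodule F (Fin n → F)) (hD : 0 < finrank F D) :
    ∃ x ∈ D, x ≠ 0 ∧ hammingNorm x ≤ n + 1 - finrank F D := by
  have hDn : finrank F D ≤ n := by simpa using Submodule.finrank_le D
  obtain ⟨R, -, hR⟩ := exists_subset_card_eq (s := (univ : Finset (Fin n)))
    (n := finrank F D - 1) (by simp only [card_univ, Fintype.card_fin]; omega)
  let restrict : D →ₗ[F] R → F := (LinearMap.funLeft F F ((↑) : R → Fin n)).comp D.subtype
  obtain ⟨⟨x, hxD⟩, hxR, hx0⟩ := Submodule.exists_mem_ne_zero_of_ne_bot <|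
    restrict.ker_ne_bot_of_finrank_lt <| by
      rw [finrank_fintype_fun_eq_card, Fintype.card_coe]; omega
  have hsupp : ({j | x j ≠ 0} : Finset (Fin n)) ⊆ Rᶜ := fun j hj =>
    mem_compl.2 fun hjR => (mem_filter.1 hj).2 (congrFun (LinearMap.mem_ker.1 hxR) ⟨j, hjR⟩)
  refine ⟨x, hxD, fun h => hx0 (Subtype.ext h), ?_⟩
  calc hammingNorm x ≤ #Rᶜ := card_le_card hsupp
    _ = n + 1 - finrank F D := by rw [card_compl, Fintype.card_fin, hR]; omega

lemma hasMinDist_of_forall_le_hammingNorm (D : Submodule F (Fin n → F)) (hD : 0 < finrank F D)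
    (h : ∀ x ∈ D, x ≠ 0 → n + 1 - finrank F D ≤ hammingNorm x) :
    HasMinDist (D : Set (Fin n → F)) (n + 1 - finrank F D) := by
  obtain ⟨x, hxD, hx0, hx⟩ := exists_ne_zero_hammingNorm_le D hD
  exact ⟨⟨x, hxD, hx0, le_antisymm hx (h x hxD hx0)⟩,
    by rintro _ ⟨y, hyD, hy0, rfl⟩; exact h y hyD hy0⟩

end HammingWeight

section GRS

variable {F : Type} [Field F] {n : ℕ} (a v : Fin n → F)

noncomputable def grsEval : F[X] →ₗ[F] Fin n → F :=
  LinearMap.pi fun j => v j • leval (a j)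

@[simp]
lemma grsEval_apply (p : F[X]) (j : Fin n) : grsEval a v p j = v j * p.eval (a j) := rfl

noncomputable def grsCode (m : ℕ) : Submodule F (Fin n → F) :=
  (degreeLT F m).map (grsEval a v)

lemma grsCode_eq_span (m : ℕ) :
    grsCode a v m = Submodule.span F (Set.range fun t : Fin m => grsEval a v (X ^ (t : ℕ))) := by
  have hdeg :
      degreeLT F m = Submodule.span F (Set.range fun t : Fin m => (X ^ (t : ℕ) : F[X])) := by
    have hX : (fun t : Fin m => (X ^ (t : ℕ) : F[X])) =
        (degreeLT F m).subtype ∘ degreeLT.basis F m :=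
      funext fun t => (degreeLT.basis_val t).symm
    rw [hX, Set.range_comp, ← Submodule.map_span, (degreeLT.basis F m).span_eq,
      Submodule.map_top, Submodule.range_subtype]
  rw [grsCode, hdeg, Submodule.map_span, ← Set.range_comp]
  rfl

variable {a v}

lemma sesqForm_grsEval_X_pow {q : ℕ} {σ : F →+* F} (hσq : ∀ x, σ x = x ^ q) (s t : ℕ) :
    sesqForm σ (grsEval a v (X ^ s)) (grsEval a v (X ^ t)) =
      ∑ j, v j ^ (q + 1) * a j ^ (s + t * q) := by
  simp only [sesqForm_apply, grsEval_apply, eval_pow, eval_X, hσq]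
  exact sum_congr rfl fun j _ => by ring

lemma card_filter_grsEval_eq_zero_le [DecidableEq F] (ha : Injective a) (hv : ∀ j, v j ≠ 0)
    {p : F[X]} (hp : p ≠ 0) : #{j | grsEval a v p j = 0} ≤ p.natDegree := by
  rw [← card_image_of_injective _ ha]
  refine card_le_degree_of_subset_roots fun x hx => ?_
  obtain ⟨j, hj, rfl⟩ := mem_image.1 (mem_def.2 hx)
  have hj' : v j * p.eval (a j) = 0 := (mem_filter.1 hj).2
  exact (mem_roots hp).2 ((mul_eq_zero.1 hj').resolve_left (hv j))

lemma le_hammingNorm_of_mem_grsCode [DecidableEq F] (ha : Injective a) (hv : ∀ j, v j ≠ 0)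
    {m : ℕ} {x : Fin n → F} (hx : x ∈ grsCode a v m) (hx0 : x ≠ 0) :
    n + 1 - m ≤ hammingNorm x := by
  obtain ⟨p, hp, rfl⟩ := Submodule.mem_map.1 hx
  have hp0 : p ≠ 0 := by rintro rfl; exact hx0 (map_zero _)
  have hpm : p.natDegree < m := (natDegree_lt_iff_degree_lt hp0).2 (mem_degreeLT.1 hp)
  have := hammingNorm_add_card_filter_eq_zero (grsEval a v p)
  have := card_filter_grsEval_eq_zero_le ha hv hp0
  omega

lemma linearIndependent_grsEval_X_pow (ha : Injective a) (hv : ∀ j, v j ≠ 0) {m : ℕ}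
    (hm : m ≤ n) : LinearIndependent F fun t : Fin m => grsEval a v (X ^ (t : ℕ)) := by
  classical
  have hker : LinearMap.ker ((grsEval a v).comp (degreeLT F m).subtype) = ⊥ := by
    refine LinearMap.ker_eq_bot'.2 fun p hp0 => ?_
    obtain ⟨p, hp⟩ := p
    change grsEval a v p = 0 at hp0
    rw [Submodule.mk_eq_zero]
    by_contra hne
    have hpm : p.natDegree < m := (natDegree_lt_iff_degree_lt hne).2 (mem_degreeLT.1 hp)
    have := card_filter_grsEval_eq_zero_le ha hv hne
    have hzeros : #{j | grsEval a v p j = 0} = n := by rw [hp0]; simp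
    omega
  simpa [comp_def] using (degreeLT.basis F m).linearIndependent.map' _ hker

lemma finrank_grsCode (ha : Injective a) (hv : ∀ j, v j ≠ 0) {m : ℕ} (hm : m ≤ n) :
    finrank F (grsCode a v m) = m := by
  rw [grsCode_eq_span, finrank_span_eq_card (linearIndependent_grsEval_X_pow ha hv hm),
    Fintype.card_fin]

lemma le_hammingNorm_of_mem_orthogonalBilin_grsCode [DecidableEq F] (ha : Injective a)
    (hv : ∀ j, v j ≠ 0) (σ : F →+* F) {m : ℕ} {y : Fin n → F}
    (hy : y ∈ (grsCode a v m).orthogonalBilin (sesqForm σ)) (hy0 : y ≠ 0) :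
    m + 1 ≤ hammingNorm y := by
  by_contra! hym
  set S : Finset (Fin n) := {j | y j ≠ 0}
  obtain ⟨j₀, hj₀⟩ : S.Nonempty := by
    rw [nonempty_iff_ne_empty, Ne, filter_eq_empty_iff]
    exact fun h => hy0 (funext fun j => not_not.1 (h (mem_univ j)))
  set p := Lagrange.basis S a j₀
  have hpm : p ∈ degreeLT F m := by
    rw [mem_degreeLT]
    refine degree_le_natDegree.trans_lt ?_
    rw [Lagrange.natDegree_basis ha.injOn hj₀]
    have hSm : #S ≤ m := Nat.lt_succ_iff.1 hym
    have hS0 : 0 < #S := card_pos.2 ⟨j₀, hj₀⟩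
    exact_mod_cast (show #S - 1 < m by omega)
  have h := hy _ (Submodule.mem_map_of_mem hpm)
  rw [sesqForm_apply, sum_eq_single j₀] at h
  · rw [grsEval_apply, Lagrange.eval_basis_self ha.injOn hj₀, mul_one] at h
    exact mul_ne_zero (hv j₀) ((map_ne_zero σ).2 (mem_filter.1 hj₀).2) h
  · intro j _ hj
    by_cases hjS : j ∈ S
    · rw [grsEval_apply, Lagrange.eval_basis_of_ne hj.symm hjS, mul_zero, zero_mul]
    · rw [not_not.1 (mt (mem_filter.2 ⟨mem_univ j, ·⟩) hjS), map_zero, mul_zero]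
  · exact fun h => (h (mem_univ j₀)).elim

lemma hasMinDist_grsCode [DecidableEq F] (ha : Injective a) (hv : ∀ j, v j ≠ 0) {m : ℕ}
    (hm0 : 0 < m) (hm : m ≤ n) :
    HasMinDist (grsCode a v m : Set (Fin n → F)) (n + 1 - m) := by
  have hC := finrank_grsCode ha hv hm
  have := hasMinDist_of_forall_le_hammingNorm _ (hC ▸ hm0) fun x hx hx0 => by
    rw [hC]; exact le_hammingNorm_of_mem_grsCode ha hv hx hx0
  rwa [hC] at this

lemma hasMinDist_orthogonalBilin_grsCode [DecidableEq F] (ha : Injective a) (hv : ∀ j, v j ≠ 0)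
    {σ : F →+* F} (hσ : Involutive σ) {m : ℕ} (hm : m < n) :
    HasMinDist ((grsCode a v m).orthogonalBilin (sesqForm σ) : Set (Fin n → F)) (m + 1) := by
  have hD := finrank_orthogonalBilin_sesqForm hσ (grsCode a v m)
  rw [finrank_grsCode ha hv hm.le] at hD
  have := hasMinDist_of_forall_le_hammingNorm _ (by rw [hD]; omega) fun y hy hy0 => by
    rw [hD]; exact (le_hammingNorm_of_mem_orthogonalBilin_grsCode ha hv σ hy hy0).trans' (by omega)
  rwa [hD, show n + 1 - (n - m) = m + 1 by omega] at this

end GRS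

section FiniteField

variable {F : Type} [Field F] [Fintype F] {q : ℕ}

lemma exists_ringHom_pow_eq_involutive (hq : IsPrimePow q) (hF : Fintype.card F = q ^ 2) :
    ∃ σ : F →+* F, (∀ x, σ x = x ^ q) ∧ Involutive σ := by
  obtain ⟨p, e, hp, -, rfl⟩ := hq
  have := Fact.mk hp.nat_prime
  have : CharP F p := charP_of_card_eq_prime_pow (f := e * 2) (by rw [hF, pow_mul])
  refine ⟨iterateFrobenius F p e, fun x => iterateFrobenius_def .., fun x => ?_⟩
  rw [iterateFrobenius_def, iterateFrobenius_def, ← pow_mul, ← sq, ← hF, FiniteField.pow_card]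

lemma FiniteField.exists_isPrimitiveRoot {d : ℕ} (hd : d ∣ Fintype.card F - 1) :
    ∃ ζ : F, IsPrimitiveRoot ζ d := by
  classical
  obtain ⟨g, hg⟩ := IsCyclic.exists_ofOrder_eq_natCard (α := Fˣ)
  obtain ⟨c, hc⟩ := hd
  rw [Nat.card_eq_fintype_card, Fintype.card_units, hc] at hg
  exact ⟨(g ^ c : Fˣ), IsPrimitiveRoot.coe_units_iff.2
    ((IsPrimitiveRoot.orderOf g).pow (orderOf_pos g) (by rw [hg, mul_comm]))⟩

lemma IsCyclic.exists_pow_eq_of_pow_eq_one {G : Type*} [Group G] [IsCyclic G] [Finite G]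
    {d e : ℕ} (hG : Nat.card G = d * e) (he : 0 < e) {x : G} (hx : x ^ e = 1) :
    ∃ y, y ^ d = x := by
  obtain ⟨g, hg⟩ := IsCyclic.exists_monoid_generator (α := G)
  obtain ⟨k, rfl⟩ := Submonoid.mem_powers_iff _ _ |>.1 (hg x)
  have hk : d * e ∣ k * e := by
    rw [← hG, ← orderOf_eq_card_of_forall_mem_powers hg]
    exact orderOf_dvd_of_pow_eq_one (by rwa [pow_mul])
  obtain ⟨c, rfl⟩ := (Nat.mul_dvd_mul_iff_right he).1 hk
  exact ⟨g ^ c, by rw [← pow_mul, mul_comm]⟩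

lemma exists_pow_succ_eq_of_pow_eq_self (hF : Fintype.card F = q ^ 2) {u : F} (hu : u ≠ 0)
    (huq : u ^ q = u) : ∃ w : F, w ^ (q + 1) = u := by
  classical
  have hq : 1 < q := by
    have := Fintype.one_lt_card (α := F)
    rw [hF] at this
    nlinarith
  obtain ⟨w, hw⟩ := IsCyclic.exists_pow_eq_of_pow_eq_one (G := Fˣ) (d := q + 1) (e := q - 1)
    (by rw [Nat.card_eq_fintype_card, Fintype.card_units, hF, ← Nat.sq_sub_sq, one_pow])
    (by omega) (x := Units.mk0 u hu)
    (Units.ext <| by simp [pow_sub₀ u hu hq.le, huq, hu])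
  exact ⟨w, by simpa using congrArg Units.val hw⟩

end FiniteField

section Construction

variable {F : Type} [Field F] {q : ℕ}

lemma IsPrimitiveRoot.sum_range_pow_mul {ζ : F} {N : ℕ} (hζ : IsPrimitiveRoot ζ N) (r : ℕ) :
    ∑ j ∈ range N, ζ ^ (j * r) = if N ∣ r then (N : F) else 0 := by
  simp_rw [mul_comm _ r, pow_mul]
  split_ifs with h
  · simp [(hζ.pow_eq_one_iff_dvd r).2 h]
  · rw [geom_sum_eq (mt (hζ.pow_eq_one_iff_dvd r).1 h), ← pow_mul, mul_comm, pow_mul,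
      hζ.pow_eq_one, one_pow, sub_self, zero_div]

lemma two_mul_succ_dvd_add_mul_iff (hq : Odd q) {s t : ℕ} (hs : s ≤ q + 1) (ht : t ≤ q + 1) :
    2 * (q + 1) ∣ s + t * q ↔ s = t ∧ Even s := by
  constructor
  · rintro ⟨c, hc⟩
    -- `s + t q = (s - t) + t (q + 1)`, so `q + 1 ∣ s - t`, while `|s - t| ≤ q + 1`
    obtain ⟨e, he⟩ : ∃ e : ℤ, e = 2 * c - t := ⟨_, rfl⟩
    have hst : (s : ℤ) - t = (q + 1) * e := by
      rw [he]
      linear_combination (by exact_mod_cast hc : (s : ℤ) + t * q = 2 * (q + 1) * c)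
    have he1 : e ≤ 1 := by nlinarith
    have he2 : -1 ≤ e := by nlinarith
    obtain ⟨j, rfl⟩ := hq
    interval_cases e <;> refine ⟨by omega, ⟨c, by omega⟩⟩
  · rintro ⟨rfl, c, rfl⟩
    exact ⟨c, by ring⟩

lemma sesqForm_grsEval_X_pow_eq_ite (hodd : Odd q) (hqF : (q : F) = 0) {σ : F →+* F}
    (hσq : ∀ x, σ x = x ^ q) {ζ : F} (hζ : IsPrimitiveRoot ζ (2 * (q + 1)))
    {a v : Fin (2 * (q + 1) + 1) → F} (ha₀ : a 0 = 0) (ha : ∀ i, a (Fin.succ i) = ζ ^ (i : ℕ))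
    (hv₀ : v 0 ^ (q + 1) = -1) (hv : ∀ i, v (Fin.succ i) ^ (q + 1) = 2⁻¹) {s t : ℕ}
    (hs : s ≤ q + 1) (ht : t ≤ q + 1) :
    sesqForm σ (grsEval a v (X ^ s)) (grsEval a v (X ^ t)) =
      if s = t ∧ s ≠ 0 ∧ Even s then 1 else 0 := by
  obtain ⟨j, hj⟩ := hodd
  have h2 : (2 : F) ≠ 0 := fun h => by simp [hj, h] at hqF
  have hN : ((2 * (q + 1) : ℕ) : F) = 2 := by push_cast [hqF]; ring
  have hzero : s + t * q = 0 ↔ s = 0 ∧ t = 0 := by simp [hj]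
  -- the point `0` contributes `-0 ^ (s + t q)`, cancelling the sum over the roots of unity at
  -- `s = t = 0`
  rw [sesqForm_grsEval_X_pow hσq, Fin.sum_univ_succ]
  simp only [ha₀, ha, hv₀, hv, ← pow_mul, ← mul_sum]
  rw [Fin.sum_univ_eq_sum_range (fun i => ζ ^ (i * (s + t * q))), hζ.sum_range_pow_mul, hN,
    zero_pow_eq]
  simp only [two_mul_succ_dvd_add_mul_iff ⟨j, hj⟩ hs ht, hzero]
  obtain rfl | hst := eq_or_ne s t
  · obtain rfl | hs0 := eq_or_ne s 0
    · simp [h2]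
    · by_cases he : Even s <;> simp [hs0, he, h2]
  · have hst0 : ¬(s = 0 ∧ t = 0) := fun h => hst (h.1.trans h.2.symm)
    simp [hst, hst0]

lemma exists_grs_diagonal_gram [Fintype F] (hodd : Odd q) (hF : Fintype.card F = q ^ 2)
    {σ : F →+* F} (hσq : ∀ x, σ x = x ^ q) :
    ∃ a v : Fin (2 * (q + 1) + 1) → F, Injective a ∧ (∀ j, v j ≠ 0) ∧
      ∀ s t, s ≤ q + 1 → t ≤ q + 1 →
        sesqForm σ (grsEval a v (X ^ s)) (grsEval a v (X ^ t)) =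
          if s = t ∧ s ≠ 0 ∧ Even s then 1 else 0 := by
  obtain ⟨j, hj⟩ := hodd
  have hqF : (q : F) = 0 := by
    rw [← pow_eq_zero_iff two_ne_zero]
    exact_mod_cast hF ▸ FiniteField.cast_card_eq_zero F
  have h2 : (2 : F) ≠ 0 := fun h => by simp [hj, h] at hqF
  obtain ⟨ζ, hζ⟩ := FiniteField.exists_isPrimitiveRoot (F := F) (d := 2 * (q + 1))
    (Dvd.intro j (by rw [hF, hj]; exact (Nat.sub_eq_of_eq_add (by ring)).symm))
  obtain ⟨v₀, hv₀⟩ := exists_pow_succ_eq_of_pow_eq_self hF (neg_ne_zero.2 one_ne_zero)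
    (by rw [← hσq, map_neg, map_one])
  obtain ⟨v₁, hv₁⟩ := exists_pow_succ_eq_of_pow_eq_self hF (inv_ne_zero h2)
    (by rw [← hσq, map_inv₀, map_ofNat])
  refine ⟨Fin.cons 0 fun i => ζ ^ (i : ℕ), Fin.cons v₀ fun _ => v₁, ?_, ?_, fun s t hs ht =>
    sesqForm_grsEval_X_pow_eq_ite ⟨j, hj⟩ hqF hσq hζ rfl (fun _ => rfl) hv₀ (fun _ => hv₁) hs ht⟩
  · refine Fin.cons_injective_iff.2 ⟨?_, fun i i' h => Fin.ext (hζ.pow_inj i.2 i'.2 h)⟩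
    rintro ⟨i, hi⟩
    exact pow_ne_zero _ (hζ.ne_zero (by omega)) hi
  · refine Fin.cases ?_ fun _ => ?_ <;> intro h <;> simp only [Fin.cons_zero, Fin.cons_succ] at h
    · rw [h, zero_pow (by omega)] at hv₀
      exact one_ne_zero (neg_eq_zero.1 hv₀.symm)
    · rw [h, zero_pow (by omega)] at hv₁
      exact inv_ne_zero h2 hv₁.symm

lemma card_filter_eq_zero_or_odd (m : ℕ) :
    #{t : Fin (m + 1) | (t : ℕ) = 0 ∨ Odd (t : ℕ)} = (m + 1) / 2 + 1 := by
  rw [card_filter, Fin.sum_univ_eq_sum_range (fun t => if t = 0 ∨ Odd t then 1 else 0)]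
  induction m with
  | zero => rfl
  | succ m ih =>
    rw [sum_range_succ, ih, if_congr (or_iff_right (Nat.succ_ne_zero m)) rfl rfl]
    by_cases h : Odd (m + 1) <;> simp only [h, if_true, if_false] <;> rw [Nat.odd_iff] at h <;>
      omega

lemma finrank_grsCode_inf_orthogonalBilin_of_gram [DecidableEq F] {n : ℕ} {a v : Fin n → F}
    {σ : F →+* F} (ha : Injective a) (hv : ∀ j, v j ≠ 0) {m : ℕ} (hm0 : 0 < m) (hm : m ≤ n)
    (hgram : ∀ s t, s < m → t < m → sesqForm σ (grsEval a v (X ^ s)) (grsEval a v (X ^ t)) =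
      if s = t ∧ s ≠ 0 ∧ Even s then 1 else 0) :
    finrank F ↥(grsCode a v m ⊓ (grsCode a v m).orthogonalBilin (sesqForm σ)) = m / 2 + 1 := by
  obtain ⟨m, rfl⟩ := Nat.exists_eq_add_one_of_ne_zero hm0.ne'
  rw [grsCode_eq_span, finrank_span_inf_orthogonalBilin_of_pairwise
    (linearIndependent_grsEval_X_pow ha hv hm) fun s t hst =>
      (hgram _ _ s.2 t.2).trans (if_neg fun h => hst (Fin.ext h.1)),
    ← card_filter_eq_zero_or_odd m]
  congr 1
  ext t
  simp only [mem_filter, mem_univ, true_and, hgram _ _ t.2 t.2, ite_eq_right_iff, one_ne_zero,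
    imp_false, not_and_or, not_not, Nat.not_even_iff_odd]

end Construction

/-- for `q` an odd prime power, `n = 2(q+1)+1` and
`k = ⌊(n+q-1)/(q+1)⌋`, for every `1 ≤ i ≤ q` there exist MDS Hermitian
`(k+i-⌊(i-1)/2⌋-1)`-dim hull codes over `F_{q²}` with parameters
`[n, k+i, n-k-i+1]` and `[n, n-k-i, k+i+1]`. -/
theorem mds_herm_hull_length_two_q_plus_three
    (q n k : ℕ) (hq : IsPrimePow q) (hodd : Odd q)
    (hn : n = 2 * (q + 1) + 1) (hk : k = (n + q - 1) / (q + 1))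
    (F : Type) [Field F] [Fintype F] [DecidableEq F]
    (hF : Fintype.card F = q ^ 2) :
    ∀ i : ℕ, 1 ≤ i → i ≤ q →
      (∃ C : Submodule F (Fin n → F),
        Module.finrank F C = k + i ∧
          HasMinDist (C : Set (Fin n → F)) (n - k - i + 1) ∧
            hermHullDim q C = k + i - (i - 1) / 2 - 1) ∧
      (∃ C : Submodule F (Fin n → F),
        Module.finrank F C = n - k - i ∧
          HasMinDist (C : Set (Fin n → F)) (k + i + 1) ∧
            hermHullDim q C = k + i - (i - 1) / 2 - 1) := by
  intro i hi hiq
  have hk2 : k = 2 := by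
    rw [hk, hn]
    exact Nat.div_eq_of_lt_le (by omega) (by omega)
  subst hk2 hn
  obtain ⟨σ, hσq, hσ⟩ := exists_ringHom_pow_eq_involutive hq hF
  obtain ⟨a, v, ha, hv, hgram⟩ := exists_grs_diagonal_gram hodd hF hσq
  set C := grsCode a v (i + 2)
  have hhull : finrank F ↥(C ⊓ C.orthogonalBilin (sesqForm σ)) = (i + 2) / 2 + 1 :=
    finrank_grsCode_inf_orthogonalBilin_of_gram ha hv (by omega) (by omega)
      fun s t hs ht => hgram s t (by omega) (by omega)
  refine ⟨⟨C, ?_, ?_, ?_⟩, ⟨C.orthogonalBilin (sesqForm σ), ?_, ?_, ?_⟩⟩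
  · rw [finrank_grsCode ha hv (by omega), add_comm]
  · convert hasMinDist_grsCode ha hv (m := i + 2) (by omega) (by omega) using 2
    omega
  · rw [hermHullDim_eq_finrank_inf hσq, hhull]
    omega
  · rw [finrank_orthogonalBilin_sesqForm hσ, finrank_grsCode ha hv (by omega)]
    omega
  · convert hasMinDist_orthogonalBilin_grsCode ha hv hσ (m := i + 2) (by omega) using 2
    omega
  · rw [hermHullDim_eq_finrank_inf hσq, orthogonalBilin_orthogonalBilin_sesqForm hσ, inf_comm,
      hhull]
    omega
end
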